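/- Let Φ = (G, φ) be a connected T-gain graph. Then ρ(A(Φ)) = ρ(A(G)) if and only if Φ is balanced or -Φ is balanced, where -Φ denotes the gain graph with gain function -φ. -/

import Mathlib

open scoped Classical

variable {V : Type*}

/-- The adjacency matrix of a `𝕋`-gain graph `Φ = (G, φ)`. -/
noncomputable def gainAdj [Fintype V] (G : SimpleGraph V) (φ : V → V → ℂ) :
    Matrix V V ℂ := fun i j => if G.Adj i j then φ i j else 0

/-- `φ` is a complex unit gain function on `G`: each gain is a unit complex number and
`φ(e_{ji}) = φ(e_{ij})⁻¹`. -/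
def IsGain (G : SimpleGraph V) (φ : V → V → ℂ) : Prop :=
  (∀ i j, G.Adj i j → ‖φ i j‖ = 1) ∧ (∀ i j, G.Adj i j → φ i j * φ j i = 1)

/-- The gain of a walk: the product of the gains of its (oriented) edges. -/
noncomputable def walkGain (φ : V → V → ℂ) {G : SimpleGraph V} {u v : V} (p : G.Walk u v) : ℂ :=
  (p.darts.map (fun d => φ d.toProd.1 d.toProd.2)).prod

/-- A gain graph is balanced if every cycle has gain `1`. -/
def IsBalanced (G : SimpleGraph V) (φ : V → V → ℂ) : Prop :=
  ∀ (v : V) (p : G.Walk v v), p.IsCycle → walkGain φ p = 1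

/-- `Σ_{C ∈ C_i(G)} Re(φ(C))`: each unoriented, unrooted cycle of length `i` corresponds to
exactly `2·i` rooted oriented cycle walks, all having the same real part of the gain. -/
noncomputable def cycleRSum (G : SimpleGraph V) (φ : V → V → ℂ) (i : ℕ) : ℝ :=
  (∑ᶠ q : {q : Σ' v : V, G.Walk v v // q.snd.IsCycle ∧ q.snd.length = i},
      (walkGain φ q.1.snd).re) / (2 * i)

/-! Let `ρ` be the spectral radius of `A(G)` and `x` an eigenvector of `A(Φ)` whose eigenvalue `μ`
has `|μ| = ρ(A(Φ))`. The triangle inequality gives `|μ| |x| ≤ A(G) |x|` entrywise. If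
`|μ| = ρ`, then `ρ - A(G)` is positive semidefinite while its quadratic form at `|x|` is `≤ 0`,
so `A(G) |x| = ρ |x|`. By connectivity `|x|` then has no zero entry, and each row of
`A(Φ) x = μ x` attains equality in the triangle inequality. This forces
`φ(e_ij) = ε D_i / D_j` with `D = x / |x|` and `ε = μ / ρ = ±1`, so `Φ` or `-Φ` is switching
equivalent to `(G, 1)`, and hence balanced.

Conversely, in a connected balanced gain graph every closed walk has gain `1`, so the gain of a
walk from `v` to a fixed root depends only on `v` and is a switching function to `(G, 1)`.
Switching preserves the characteristic polynomial, and `A(-Φ) = -A(Φ)` has the same spectral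
radius as `A(Φ)`. -/

open ComplexConjugate Matrix SimpleGraph
open scoped ComplexOrder

lemma Complex.mul_norm_sum_eq_of_norm_sum_eq {ι : Type*} {s : Finset ι} {f : ι → ℂ}
    (h : ‖∑ i ∈ s, f i‖ = ∑ i ∈ s, ‖f i‖) {j : ι} (hj : j ∈ s) :
    f j * ‖∑ i ∈ s, f i‖ = (∑ i ∈ s, f i) * ‖f j‖ := by
  set S := ∑ i ∈ s, f i
  rcases eq_or_ne S 0 with hS | hS
  · simp [hS]
  -- `re (conj S * f i) ≤ ‖conj S * f i‖` for each `i`, with equality after summing over `s`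
  have hsum : ∑ i ∈ s, (‖conj S * f i‖ - (conj S * f i).re) = 0 := by
    rw [Finset.sum_sub_distrib, ← Complex.re_sum, ← Finset.mul_sum, Complex.conj_mul']
    simp only [norm_mul, Complex.norm_conj, ← Finset.mul_sum, ← h]
    norm_cast
    ring
  have hj' := (Finset.sum_eq_zero_iff_of_nonneg fun i _ =>
    sub_nonneg.2 (Complex.re_le_norm _)).1 hsum j hj
  have hnn : conj S * f j = ‖S‖ * ‖f j‖ := by
    rw [Complex.eq_re_of_ofReal_le (Complex.re_eq_norm.1 (sub_eq_zero.1 hj').symm),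
      ← sub_eq_zero.1 hj']
    simp
  have hS' : (‖S‖ : ℂ) ≠ 0 := by exact_mod_cast norm_ne_zero_iff.2 hS
  apply mul_left_cancel₀ hS'
  linear_combination S * hnn - f j * Complex.mul_conj' S

namespace Matrix

variable {𝕜 : Type*} [RCLike 𝕜] {n : Type*} [Fintype n] {A B : Matrix n n 𝕜}

lemma PosSemidef.mulVec_eq_zero_of_re_dotProduct_nonpos (hA : A.PosSemidef) {x : n → 𝕜}
    (hx : RCLike.re (star x ⬝ᵥ A *ᵥ x) ≤ 0) : A *ᵥ x = 0 := by
  refine (hA.dotProduct_mulVec_zero_iff x).1 ?_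
  have h := RCLike.nonneg_iff.1 (hA.dotProduct_mulVec_nonneg x)
  exact RCLike.ext (by simpa using le_antisymm hx h.1) (by simpa using h.2)

namespace IsHermitian

variable [DecidableEq n]

lemma iSup_abs_eigenvalues_eq_of_charpoly_eq (hA : A.IsHermitian) (hB : B.IsHermitian)
    (h : A.charpoly = B.charpoly) : ⨆ i, |hA.eigenvalues i| = ⨆ i, |hB.eigenvalues i| := by
  rw [(hA.eigenvalues_eq_eigenvalues_iff hB).2 h]

lemma iSup_abs_eigenvalues_neg (hA : A.IsHermitian) (hnA : (-A).IsHermitian) :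
    ⨆ i, |hnA.eigenvalues i| = ⨆ i, |hA.eigenvalues i| := by
  have h := hnA.spectrum_real_eq_range_eigenvalues
  rw [← spectrum.neg_eq, hA.spectrum_real_eq_range_eigenvalues] at h
  rw [← sSup_range, ← sSup_range, Set.range_comp' abs, ← h, Set.range_comp' abs,
    ← Set.image_neg_eq_neg, Set.image_image]
  simp_rw [abs_neg]

lemma eigenvalues_le_iSup_abs (hA : A.IsHermitian) (i : n) :
    hA.eigenvalues i ≤ ⨆ i, |hA.eigenvalues i| :=
  (le_abs_self _).trans
    (le_ciSup (f := fun i => |hA.eigenvalues i|) (Set.finite_range _).bddAbove i)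

lemma posSemidef_algebraMap_sub (hA : A.IsHermitian) {r : ℝ}
    (hr : ∀ i, hA.eigenvalues i ≤ r) : (algebraMap ℝ _ r - A).PosSemidef := by
  have hM : (algebraMap ℝ _ r - A).IsHermitian := (IsSelfAdjoint.algebraMap _ (.all r)).sub hA
  rw [hM.posSemidef_iff_eigenvalues_nonneg]
  intro i
  have hi := hM.eigenvalues_mem_spectrum_real i
  rw [← spectrum.singleton_sub_eq, hA.spectrum_real_eq_range_eigenvalues] at hi
  obtain ⟨_, rfl, _, ⟨j, rfl⟩, hij⟩ := hi
  simp [← hij, hr j]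

lemma mulVec_ofReal_eq_of_le (hA : A.IsHermitian) {r : ℝ} (hr : ∀ i, hA.eigenvalues i ≤ r)
    {y : n → ℝ} (hy : 0 ≤ y) (h : ∀ i, r * y i ≤ RCLike.re ((A *ᵥ fun j => (y j : 𝕜)) i)) :
    A *ᵥ (fun j => (y j : 𝕜)) = (r : 𝕜) • fun j => (y j : 𝕜) := by
  set z : n → 𝕜 := fun j => (y j : 𝕜)
  have hMz : (algebraMap ℝ _ r - A) *ᵥ z = (r : 𝕜) • z - A *ᵥ z := by
    rw [sub_mulVec, Algebra.algebraMap_eq_smul_one, smul_mulVec, one_mulVec,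
      RCLike.real_smul_eq_coe_smul (K := 𝕜)]
  suffices hform : RCLike.re (star z ⬝ᵥ (algebraMap ℝ _ r - A) *ᵥ z) ≤ 0 by
    have hker := (hA.posSemidef_algebraMap_sub hr).mulVec_eq_zero_of_re_dotProduct_nonpos hform
    rwa [hMz, sub_eq_zero, eq_comm] at hker
  rw [hMz]
  simp only [dotProduct, Pi.star_apply, Pi.sub_apply, Pi.smul_apply, smul_eq_mul, map_sum]
  refine Finset.sum_nonpos fun i _ => ?_
  simpa [z] using mul_nonpos_of_nonneg_of_nonpos (hy i) (sub_nonpos.2 (h i))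

end IsHermitian

end Matrix

/-- `(G, φ)` is switching equivalent to `(G, 1)`: `φ(e_ij) = D_i D_j⁻¹`. The paper takes `D`
unitary; for unit gains on a connected graph `‖D‖` is constant, so this is the same notion. -/
def IsSwitchingTrivial (G : SimpleGraph V) (φ : V → V → ℂ) : Prop :=
  ∃ D : V → ℂ, (∀ v, D v ≠ 0) ∧ ∀ i j, G.Adj i j → φ i j * D j = D i

section WalkGain

variable {G : SimpleGraph V} {φ : V → V → ℂ}

@[simp] lemma walkGain_nil {u : V} : walkGain φ (Walk.nil : G.Walk u u) = 1 := rfl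

@[simp] lemma walkGain_cons {u v w : V} (h : G.Adj u v) (p : G.Walk v w) :
    walkGain φ (Walk.cons h p) = φ u v * walkGain φ p := by
  simp [walkGain]

@[simp] lemma walkGain_append {u v w : V} (p : G.Walk u v) (q : G.Walk v w) :
    walkGain φ (p.append q) = walkGain φ p * walkGain φ q := by
  simp [walkGain]

lemma walkGain_mul_eq_of_mul_eq {D : V → ℂ} (hD : ∀ i j, G.Adj i j → φ i j * D j = D i)
    {u v : V} (p : G.Walk u v) : walkGain φ p * D v = D u := by
  induction p with
  | nil => simp
  | cons h p ih => rw [walkGain_cons, mul_assoc, ih, hD _ _ h]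

lemma IsSwitchingTrivial.isBalanced (h : IsSwitchingTrivial G φ) : IsBalanced G φ := by
  obtain ⟨D, hD0, hD⟩ := h
  intro v p _
  simpa [hD0 v] using walkGain_mul_eq_of_mul_eq hD p

lemma isSwitchingTrivial_of_mul_norm_eq {x : V → ℂ} (hx : ∀ i, x i ≠ 0)
    (h : ∀ i j, G.Adj i j → φ i j * x j * ‖x i‖ = x i * ‖x j‖) : IsSwitchingTrivial G φ := by
  refine ⟨fun i => x i / ‖x i‖, fun i => by simp [hx i], fun i j hij => ?_⟩
  have hi : (‖x i‖ : ℂ) ≠ 0 := by simpa using hx i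
  have hj : (‖x j‖ : ℂ) ≠ 0 := by simpa using hx j
  field_simp
  linear_combination h i j hij

namespace IsBalanced

lemma mul_walkGain_eq_one (hbal : IsBalanced G φ)
    (hinv : ∀ i j, G.Adj i j → φ i j * φ j i = 1) {u w : V} (h : G.Adj u w) {p : G.Walk w u}
    (hp : p.IsPath) : φ u w * walkGain φ p = 1 := by
  by_cases he : s(u, w) ∈ p.edges
  · rw [hp.eq_adj_toWalk_of_mem_edges (Sym2.eq_swap ▸ he)]
    simpa using hinv u w h
  · simpa using hbal u _ ((Walk.cons_isCycle_iff p h).2 ⟨hp, he⟩)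

/-- `bypass` only cuts out closed subwalks `u → w ⇝ u` with `w ⇝ u` a path; each is a cycle or a
backtracked edge, so has gain `1`. -/
lemma walkGain_bypass [DecidableEq V] (hbal : IsBalanced G φ)
    (hinv : ∀ i j, G.Adj i j → φ i j * φ j i = 1) {u v : V} (p : G.Walk u v) :
    walkGain φ p.bypass = walkGain φ p := by
  induction p with
  | nil => rfl
  | @cons u w v h p ih =>
    rw [Walk.bypass]
    split_ifs with hu
    · conv_rhs => rw [walkGain_cons, ← ih, ← p.bypass.take_spec hu, walkGain_append,
        ← mul_assoc, hbal.mul_walkGain_eq_one hinv h (p.bypass_isPath.takeUntil hu), one_mul]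
    · rw [walkGain_cons, ih, walkGain_cons]

lemma walkGain_eq_one (hbal : IsBalanced G φ)
    (hinv : ∀ i j, G.Adj i j → φ i j * φ j i = 1) {v : V} (p : G.Walk v v) : walkGain φ p = 1 := by
  classical
  rw [← hbal.walkGain_bypass hinv, (Walk.isPath_iff_nil.1 p.bypass_isPath).eq_nil, walkGain_nil]

lemma walkGain_eq (hbal : IsBalanced G φ)
    (hinv : ∀ i j, G.Adj i j → φ i j * φ j i = 1) {u v : V} (p q : G.Walk u v) :
    walkGain φ p = walkGain φ q := by
  have hp := hbal.walkGain_eq_one hinv (p.append q.reverse)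
  have hq := hbal.walkGain_eq_one hinv (q.append q.reverse)
  rw [walkGain_append] at hp hq
  exact mul_right_cancel₀ (right_ne_zero_of_mul_eq_one hq) (hp.trans hq.symm)

lemma isSwitchingTrivial (hbal : IsBalanced G φ)
    (hinv : ∀ i j, G.Adj i j → φ i j * φ j i = 1) (hconn : G.Connected) :
    IsSwitchingTrivial G φ := by
  obtain ⟨r⟩ := hconn.nonempty
  have w : ∀ v, G.Walk v r := fun v => (hconn.preconnected v r).some
  refine ⟨fun v => walkGain φ (w v), fun v => ?_, fun i j h => ?_⟩
  · exact left_ne_zero_of_mul_eq_one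
      (by simpa using hbal.walkGain_eq_one hinv ((w v).append (w v).reverse))
  · rw [← walkGain_cons h, hbal.walkGain_eq hinv]

end IsBalanced

end WalkGain

lemma SimpleGraph.Connected.ne_zero_of_sum_neighborFinset_eq [Fintype V] {G : SimpleGraph V}
    [DecidableRel G.Adj] (hconn : G.Connected) {y : V → ℝ} (hy : 0 ≤ y) (hy0 : y ≠ 0) {c : ℝ}
    (h : ∀ i, ∑ j ∈ G.neighborFinset i, y j = c * y i) (i : V) : y i ≠ 0 := by
  have step : ∀ u v, G.Adj u v → y u = 0 → y v = 0 := fun u v huv hu =>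
    (Finset.sum_eq_zero_iff_of_nonneg fun j _ => hy j).1 (by rw [h u, hu, mul_zero]) v
      ((mem_neighborFinset G u v).2 huv)
  intro hi
  refine hy0 (funext fun j => ?_)
  obtain ⟨p⟩ := hconn.preconnected i j
  induction p with
  | nil => exact hi
  | cons huv _ ih => exact ih (step _ _ huv hi)

section GainAdj

variable [Fintype V] {G : SimpleGraph V} {φ : V → V → ℂ}

lemma gainAdj_neg : gainAdj G (fun i j => -φ i j) = -gainAdj G φ := by
  ext i j
  by_cases h : G.Adj i j <;> simp [gainAdj, h]

variable [DecidableRel G.Adj]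

lemma gainAdj_mulVec_apply (x : V → ℂ) (i : V) :
    (gainAdj G φ *ᵥ x) i = ∑ j ∈ G.neighborFinset i, φ i j * x j := by
  simp [gainAdj, mulVec, dotProduct, neighborFinset_eq_filter, Finset.sum_filter]

lemma IsSwitchingTrivial.charpoly_gainAdj [DecidableEq V] (h : IsSwitchingTrivial G φ) :
    (gainAdj G φ).charpoly = (G.adjMatrix ℂ).charpoly := by
  obtain ⟨D, hD0, hD⟩ := h
  have hconj : gainAdj G φ = diagonal D * (G.adjMatrix ℂ * diagonal D⁻¹) := by
    ext i j
    by_cases hij : G.Adj i j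
    · simp [gainAdj, hij, ← hD i j hij, hD0 j]
    · simp [gainAdj, hij]
  rw [hconj, charpoly_mul_comm, mul_assoc, diagonal_mul_diagonal]
  simp [hD0]

lemma norm_gainAdj_mul (hφ : ∀ i j, G.Adj i j → ‖φ i j‖ = 1) (x : V → ℂ) (i : V) {j : V}
    (hj : j ∈ G.neighborFinset i) : ‖φ i j * x j‖ = ‖x j‖ := by
  rw [norm_mul, hφ i j ((mem_neighborFinset G i j).1 hj), one_mul]

lemma gain_mul_norm_eq_of_sum_norm_eq (hφ : ∀ i j, G.Adj i j → ‖φ i j‖ = 1) {x : V → ℂ} {μ : ℝ}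
    (hμ : gainAdj G φ *ᵥ x = μ • x) (hsum : ∀ i, ∑ j ∈ G.neighborFinset i, ‖x j‖ = |μ| * ‖x i‖)
    {i j : V} (hij : G.Adj i j) : φ i j * x j * ‖x i‖ * |μ| = μ * x i * ‖x j‖ := by
  have hrow : ∑ k ∈ G.neighborFinset i, φ i k * x k = μ * x i := by
    rw [← gainAdj_mulVec_apply, hμ]; simp
  have htri := Complex.mul_norm_sum_eq_of_norm_sum_eq (s := G.neighborFinset i)
    (f := fun k => φ i k * x k) ?_ ((mem_neighborFinset G i j).2 hij)
  · rw [hrow, norm_gainAdj_mul hφ x i ((mem_neighborFinset G i j).2 hij), norm_mul,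
      Complex.norm_real, Real.norm_eq_abs] at htri
    push_cast at htri
    linear_combination htri
  · rw [hrow, Finset.sum_congr rfl fun k hk => norm_gainAdj_mul hφ x i hk, hsum i]
    simp

variable [DecidableEq V]

lemma sum_norm_neighborFinset_eq (hφ : ∀ i j, G.Adj i j → ‖φ i j‖ = 1)
    (hG : (G.adjMatrix ℂ).IsHermitian) {x : V → ℂ} {μ : ℝ} (hμ : gainAdj G φ *ᵥ x = μ • x)
    (hμρ : |μ| = ⨆ i, |hG.eigenvalues i|) (i : V) :
    ∑ j ∈ G.neighborFinset i, ‖x j‖ = |μ| * ‖x i‖ := by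
  have hle (i : V) : |μ| * ‖x i‖ ≤ ∑ j ∈ G.neighborFinset i, ‖x j‖ :=
    calc |μ| * ‖x i‖ = ‖∑ j ∈ G.neighborFinset i, φ i j * x j‖ := by
          rw [← gainAdj_mulVec_apply, hμ]; simp
      _ ≤ ∑ j ∈ G.neighborFinset i, ‖φ i j * x j‖ := norm_sum_le _ _
      _ = ∑ j ∈ G.neighborFinset i, ‖x j‖ :=
          Finset.sum_congr rfl fun j hj => norm_gainAdj_mul hφ x i hj
  have := congrFun (hG.mulVec_ofReal_eq_of_le (fun i => hμρ ▸ hG.eigenvalues_le_iSup_abs i)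
    (y := fun j => ‖x j‖) (fun j => norm_nonneg _) fun i => by simpa using hle i) i
  simp only [adjMatrix_mulVec_apply, Pi.smul_apply, smul_eq_mul] at this
  exact_mod_cast this

theorem isSwitchingTrivial_or_neg_of_abs_eq_iSup (hconn : G.Connected)
    (hφ : ∀ i j, G.Adj i j → ‖φ i j‖ = 1) (hG : (G.adjMatrix ℂ).IsHermitian) {x : V → ℂ}
    (hx : x ≠ 0) {μ : ℝ} (hμ : gainAdj G φ *ᵥ x = μ • x) (hμρ : |μ| = ⨆ i, |hG.eigenvalues i|) :
    IsSwitchingTrivial G φ ∨ IsSwitchingTrivial G (fun i j => -φ i j) := by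
  have hsum := sum_norm_neighborFinset_eq hφ hG hμ hμρ
  have hx0 (i : V) : x i ≠ 0 := norm_ne_zero_iff.1 <|
    hconn.ne_zero_of_sum_neighborFinset_eq (y := fun j => ‖x j‖) (fun j => norm_nonneg _)
      (fun h => hx (funext fun j => norm_eq_zero.1 (congrFun h j))) hsum i
  have hμ0 (i j : V) (hij : G.Adj i j) : ((|μ| : ℝ) : ℂ) ≠ 0 := by
    intro h0
    have hi := hsum i
    rw [Complex.ofReal_eq_zero.1 h0, zero_mul] at hi
    exact hx0 j (norm_eq_zero.1 ((Finset.sum_eq_zero_iff_of_nonneg fun _ _ => norm_nonneg _).1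
      hi j ((mem_neighborFinset G i j).2 hij)))
  rcases abs_choice μ with h | h
  · refine .inl (isSwitchingTrivial_of_mul_norm_eq hx0 fun i j hij =>
      mul_right_cancel₀ (hμ0 i j hij) ?_)
    have := gain_mul_norm_eq_of_sum_norm_eq hφ hμ hsum hij
    rw [h] at this ⊢
    linear_combination this
  · refine .inr (isSwitchingTrivial_of_mul_norm_eq hx0 fun i j hij =>
      mul_right_cancel₀ (hμ0 i j hij) ?_)
    have := gain_mul_norm_eq_of_sum_norm_eq hφ hμ hsum hij
    rw [h] at this ⊢
    push_cast at this ⊢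
    linear_combination -this

end GainAdj

/-- For a connected `𝕋`-gain graph `Φ = (G, φ)`,
`ρ(A(Φ)) = ρ(A(G))` iff `Φ` is balanced or `-Φ` is balanced. -/
theorem spectral_radius_eq_iff_balanced {n : ℕ} (G : SimpleGraph (Fin n))
    [DecidableRel G.Adj] (hconn : G.Connected)
    (φ : Fin n → Fin n → ℂ) (hφ : IsGain G φ)
    (hA : (gainAdj G φ).IsHermitian) (hG : (G.adjMatrix ℂ).IsHermitian) :
    (⨆ i, |hA.eigenvalues i|) = (⨆ i, |hG.eigenvalues i|) ↔
      IsBalanced G φ ∨ IsBalanced G (fun i j => -φ i j) := by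
  have : Nonempty (Fin n) := hconn.nonempty
  have hinv_neg (i j : Fin n) (hij : G.Adj i j) : -φ i j * -φ j i = 1 := by
    simpa using hφ.2 i j hij
  constructor
  · intro h
    obtain ⟨k, hk⟩ : ∃ k, |hA.eigenvalues k| = ⨆ i, |hA.eigenvalues i| :=
      exists_eq_ciSup_of_finite
    have hx : ⇑(hA.eigenvectorBasis k) ≠ 0 :=
      (WithLp.ofLp_eq_zero 2).ne.2 (hA.eigenvectorBasis.orthonormal.ne_zero k)
    exact (isSwitchingTrivial_or_neg_of_abs_eq_iSup hconn hφ.1 hG hx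
      (hA.mulVec_eigenvectorBasis k) (hk.trans h)).imp
      IsSwitchingTrivial.isBalanced IsSwitchingTrivial.isBalanced
  · rintro (h | h)
    · exact hA.iSup_abs_eigenvalues_eq_of_charpoly_eq hG
        (h.isSwitchingTrivial hφ.2 hconn).charpoly_gainAdj
    · rw [← hA.iSup_abs_eigenvalues_neg hA.neg]
      refine hA.neg.iSup_abs_eigenvalues_eq_of_charpoly_eq hG ?_
      rw [← gainAdj_neg]
      exact (h.isSwitchingTrivial hinv_neg hconn).charpoly_gainAdj
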